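/- arXiv:2004.14007 — 8 statements merged into one kernel-verified Lean document; each statement's English description precedes it below -/
import Mathlib

section
/- For every matrix A in SL_2(ℤ) there exist an integer n ≥ 1 and strictly positive integers a_1, …, a_n such that A = M_n(a_1, …, a_n). -/
/-!
Since `genMat a = Tᵃ S`, the matrices `Mprod l` with `l` a list of positive integers form a
submonoid of `SL(2, ℤ)`. Explicit positive words give `S`, `T` and their inverses, and these
generate `SL(2, ℤ)` as a group, hence already as a monoid. Padding a word with six `1`s, as
`(T S)⁶ = 1`, makes it nonempty.
-/

/-- The elementary matrix `[[a, -1], [1, 0]]`. -/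
def genMat (a : ℤ) : Matrix (Fin 2) (Fin 2) ℤ := !![a, -1; 1, 0]

/-- `Mprod [a₁, …, aₙ] = [[aₙ,-1],[1,0]] ⋯ [[a₁,-1],[1,0]]`. -/
def Mprod (l : List ℤ) : Matrix (Fin 2) (Fin 2) ℤ := ((l.map genMat).reverse).prod

open Matrix MatrixGroups ModularGroup

theorem Submonoid.eq_top_of_closure_eq_top {G : Type*} [Group G] {M : Submonoid G} {s : Set G}
    (hs : Subgroup.closure s = ⊤) (hsM : s ∪ s⁻¹ ⊆ M) : M = ⊤ := by
  refine eq_top_iff.2 fun g _ => ?_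
  have hg : g ∈ (Subgroup.closure s).toSubmonoid := hs ▸ Subgroup.mem_top g
  rw [Subgroup.closure_toSubmonoid] at hg
  exact Submonoid.closure_le.2 hsM hg

lemma Mprod_append (l₁ l₂ : List ℤ) : Mprod (l₁ ++ l₂) = Mprod l₂ * Mprod l₁ := by
  simp [Mprod]

lemma Mprod_replicate_six_one : Mprod (List.replicate 6 1) = 1 := by
  simp [Mprod, genMat, List.replicate, one_fin_two]

def posMprodSubmonoid : Submonoid SL(2, ℤ) where
  carrier := {A | ∃ l : List ℤ, (∀ x ∈ l, 0 < x) ∧ Mprod l = A}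
  one_mem' := ⟨[], by simp, by simp [Mprod]⟩
  mul_mem' := by
    rintro A B ⟨lA, hlA, hA⟩ ⟨lB, hlB, hB⟩
    refine ⟨lB ++ lA, fun x hx => ?_, by rw [Mprod_append, hA, hB]; rfl⟩
    rcases List.mem_append.1 hx with hx | hx
    exacts [hlB x hx, hlA x hx]

lemma posMprodSubmonoid_eq_top : posMprodSubmonoid = ⊤ := by
  refine Submonoid.eq_top_of_closure_eq_top SpecialLinearGroup.SL2Z_generators ?_
  have hS : S ∈ posMprodSubmonoid :=
    ⟨[1, 1, 1, 1, 1, 2, 1, 1], by simp, by simp [Mprod, genMat, coe_S]⟩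
  have hT : T ∈ posMprodSubmonoid :=
    ⟨[1, 1, 1, 1, 1, 2], by simp, by simp [Mprod, genMat, coe_T]⟩
  have hSinv : S⁻¹ ∈ posMprodSubmonoid :=
    ⟨[1, 1, 2, 1, 1], by simp, by simp [Mprod, genMat, coe_S, adjugate_fin_two]⟩
  have hTinv : T⁻¹ ∈ posMprodSubmonoid :=
    ⟨[1, 1, 1, 1, 2, 1, 1], by simp, by simp [Mprod, genMat]⟩
  simp only [Set.inv_insert, Set.inv_singleton, Set.union_subset_iff, Set.insert_subset_iff,
    Set.singleton_subset_iff, SetLike.mem_coe]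
  exact ⟨⟨hS, hT⟩, hSinv, hTinv⟩

/-- Every matrix in `SL₂(ℤ)` can be written as `Mₙ(a₁,…,aₙ)` with all `aᵢ > 0`. -/
theorem stmt0 (A : Matrix.SpecialLinearGroup (Fin 2) ℤ) :
    ∃ l : List ℤ, l ≠ [] ∧ (∀ x ∈ l, 0 < x) ∧ Mprod l = (A : Matrix (Fin 2) (Fin 2) ℤ) := by
  obtain ⟨l, hl, hA⟩ : A ∈ posMprodSubmonoid := posMprodSubmonoid_eq_top ▸ Submonoid.mem_top A
  refine ⟨l ++ List.replicate 6 1, by simp, fun x hx => ?_, ?_⟩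
  · rcases List.mem_append.1 hx with hx | hx
    exacts [hl x hx, (List.eq_of_mem_replicate hx).symm ▸ one_pos]
  · rw [Mprod_append, Mprod_replicate_six_one, one_mul, hA]
end

section
/- Let M ∈ SL_2(ℤ) be of finite order (i.e. M^k = Id for some integer k ≥ 1). Then for every n ≥ 1 and every n-tuple of strictly positive integers (a_1,…,a_n) satisfying M_n(a_1,…,a_n) = M or M_n(a_1,…,a_n) = −M, there exists an index i with a_i = 1. -/
/-- invariant on the running product. -/
def InvP (A : Matrix (Fin 2) (Fin 2) ℤ) : Prop :=
  1 ≤ A 1 0 ∧ A 1 0 + 1 ≤ A 0 0 ∧ 1 ≤ A 1 0 + A 1 1 ∧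
  A 0 1 ≤ A 1 1 - 1 ∧ A 1 0 + A 1 1 ≤ A 0 0 + A 0 1 ∧ 2 ≤ A 0 0 + A 1 1

lemma inv_base {a : ℤ} (ha : 2 ≤ a) : InvP (genMat a) := by
  constructor <;> simp [genMat] <;> omega

lemma inv_step {A : Matrix (Fin 2) (Fin 2) ℤ} (hA : InvP A) {a : ℤ} (ha : 2 ≤ a) :
    InvP (A * genMat a) := by
  obtain ⟨h1, h2, h3, h4, h5, h6⟩ := hA
  have e00 : (A * genMat a) 0 0 = A 0 0 * a + A 0 1 := by
    simp [genMat, Matrix.mul_apply, Fin.sum_univ_two]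
  have e01 : (A * genMat a) 0 1 = -A 0 0 := by
    simp [genMat, Matrix.mul_apply, Fin.sum_univ_two]
  have e10 : (A * genMat a) 1 0 = A 1 0 * a + A 1 1 := by
    simp [genMat, Matrix.mul_apply, Fin.sum_univ_two]
  have e11 : (A * genMat a) 1 1 = -A 1 0 := by
    simp [genMat, Matrix.mul_apply, Fin.sum_univ_two]
  refine ⟨?_, ?_, ?_, ?_, ?_, ?_⟩ <;> simp only [e00, e01, e10, e11] <;> nlinarith

lemma mprod_cons (a : ℤ) (l : List ℤ) : Mprod (a :: l) = Mprod l * genMat a := by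
  simp [Mprod, List.reverse_cons, List.prod_append]

lemma inv_mprod (l : List ℤ) (hne : l ≠ []) (h2 : ∀ x ∈ l, 2 ≤ x) : InvP (Mprod l) := by
  induction l with
  | nil => exact absurd rfl hne
  | cons a l ih =>
    by_cases hl : l = []
    · subst hl
      have : Mprod [a] = genMat a := by simp [Mprod]
      rw [this]
      exact inv_base (h2 a (by simp))
    · rw [mprod_cons]
      exact inv_step (ih hl (fun x hx => h2 x (List.mem_cons_of_mem _ hx)))
        (h2 a (by simp))

lemma cayley (A : Matrix (Fin 2) (Fin 2) ℤ) (hdet : A.det = 1) :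
    A * A = A.trace • A - 1 := by
  have hd := A.det_fin_two
  rw [hdet] at hd
  have ht : A.trace = A 0 0 + A 1 1 := A.trace_fin_two
  ext i j
  fin_cases i <;> fin_cases j <;>
    simp only [Matrix.mul_apply, Fin.sum_univ_two, Matrix.smul_apply, Matrix.sub_apply,
      Matrix.one_apply, ht, smul_eq_mul, Fin.zero_eta, Fin.mk_one] <;>
    norm_num <;> nlinarith [hd]

lemma key (A : Matrix (Fin 2) (Fin 2) ℤ) (hdet : A.det = 1) (ht : 2 ≤ A.trace)
    (hr : 1 ≤ A 1 0) (k : ℕ) (hk : 1 ≤ k) : A ^ k ≠ 1 := by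
  have main : ∀ m : ℕ, 1 ≤ m → ∃ c d : ℤ, d + 1 ≤ c ∧ 0 ≤ d ∧ A ^ m = c • A - d • 1 := by
    intro m hm
    induction m, hm using Nat.le_induction with
    | base => exact ⟨1, 0, by norm_num, le_refl 0, by simp⟩
    | succ n hn ih =>
      obtain ⟨c, d, hcd, hd, hA⟩ := ih
      refine ⟨c * A.trace - d, c, by nlinarith, by linarith, ?_⟩
      rw [pow_succ, hA, sub_mul, smul_mul_assoc, smul_mul_assoc, one_mul,
        cayley A hdet]
      rw [smul_sub, smul_smul]
      module
  intro hpow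
  obtain ⟨c, d, hcd, hd, hA⟩ := main k hk
  rw [hpow] at hA
  have h10 := congrFun (congrFun hA 1) 0
  simp only [Matrix.one_apply, Matrix.sub_apply, Matrix.smul_apply, smul_eq_mul] at h10
  norm_num at h10
  rcases h10 with h | h <;> omega

/-- If `M ∈ SL₂(ℤ)` has finite order, every positive solution of `Mₙ(a₁,…,aₙ) = ±M`
contains a 1. -/
theorem stmt3 (M : Matrix.SpecialLinearGroup (Fin 2) ℤ)
    (hM : ∃ k : ℕ, 1 ≤ k ∧ M ^ k = 1)
    (l : List ℤ) (hne : l ≠ []) (hpos : ∀ x ∈ l, 0 < x)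
    (hsol : Mprod l = (M : Matrix (Fin 2) (Fin 2) ℤ) ∨
            Mprod l = -(M : Matrix (Fin 2) (Fin 2) ℤ)) :
    ∃ x ∈ l, x = 1 := by
  by_contra hno
  push_neg at hno
  have h2 : ∀ x ∈ l, 2 ≤ x := fun x hx => by
    have := hpos x hx; have := hno x hx; omega
  have hInv := inv_mprod l hne h2
  obtain ⟨k, hk, hMk⟩ := hM
  set A := Mprod l with hAdef
  obtain ⟨h1, _, _, _, _, h6⟩ := hInv
  have htr : 2 ≤ A.trace := by rwa [Matrix.trace_fin_two]
  have hMcoe : ((M : Matrix (Fin 2) (Fin 2) ℤ)) ^ k = 1 := by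
    calc ((M : Matrix (Fin 2) (Fin 2) ℤ)) ^ k = ((M ^ k : Matrix.SpecialLinearGroup (Fin 2) ℤ) : Matrix (Fin 2) (Fin 2) ℤ) := by
          simp
      _ = 1 := by rw [hMk]; simp
  rcases hsol with h | h
  · have hdet : A.det = 1 := by rw [h]; exact M.2
    have : A ^ k = 1 := by rw [h]; exact hMcoe
    exact key A hdet htr h1 k hk this
  · have hdet : A.det = 1 := by
      rw [h, Matrix.det_neg]
      simp [M.2]
    have hAk : A ^ (2 * k) = 1 := by
      have h2' : A ^ 2 = (M : Matrix (Fin 2) (Fin 2) ℤ) ^ 2 := by rw [h, neg_sq]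
      rw [pow_mul, h2', ← pow_mul, mul_comm, pow_mul, hMcoe, one_pow]
    exact key A hdet htr h1 (2 * k) (by omega) hAk
end

section
/- Say that M ∈ SL_2(ℤ) satisfies property 𝒫 if, for every k ≥ 1 and every k-tuple of strictly positive integers (a_1,…,a_k) with M_k(a_1,…,a_k) = M, every cyclic permutation (a_{j+1},…,a_k,a_1,…,a_j) also satisfies M_k(a_{j+1},…,a_k,a_1,…,a_j) = M. Then M satisfies 𝒫 if and only if M = Id or M = −Id. -/
open Matrix MatrixGroups ModularGroup

def genSL (a : ℤ) : SL(2, ℤ) := ⟨genMat a, by simp [genMat, det_fin_two_of]⟩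

lemma genSL_eq_T_zpow_mul_S (a : ℤ) : genSL a = T ^ a * S := by
  ext i j
  fin_cases i <;> fin_cases j <;> simp [genSL, genMat, coe_T_zpow, coe_S]

def MprodSL (l : List ℤ) : SL(2, ℤ) := ((l.map genSL).reverse).prod

lemma coe_MprodSL (l : List ℤ) : (MprodSL l : Matrix (Fin 2) (Fin 2) ℤ) = Mprod l := by
  rw [MprodSL, Mprod, ← SpecialLinearGroup.coeMonoidHom_apply, map_list_prod]
  simp [List.map_reverse, Function.comp_def, genSL]
  rfl

lemma Mprod_eq_coe_iff {l : List ℤ} {M : SL(2, ℤ)} :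
    Mprod l = (M : Matrix (Fin 2) (Fin 2) ℤ) ↔ MprodSL l = M := by
  rw [← coe_MprodSL]
  exact Subtype.coe_injective.eq_iff

@[simp]
lemma MprodSL_nil : MprodSL [] = 1 := rfl

@[simp]
lemma MprodSL_cons (a : ℤ) (l : List ℤ) : MprodSL (a :: l) = MprodSL l * genSL a := by
  simp [MprodSL]

lemma MprodSL_append (l₁ l₂ : List ℤ) : MprodSL (l₁ ++ l₂) = MprodSL l₂ * MprodSL l₁ := by
  simp [MprodSL]

lemma MprodSL_rotate_one_cons (a : ℤ) (l : List ℤ) :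
    MprodSL ((a :: l).rotate 1) = genSL a * MprodSL (a :: l) * (genSL a)⁻¹ := by
  simp [MprodSL_append, mul_assoc]

lemma isConj_MprodSL_rotate (l : List ℤ) (j : ℕ) : IsConj (MprodSL l) (MprodSL (l.rotate j)) := by
  induction j with
  | zero => rw [List.rotate_zero]
  | succ j ih =>
    refine ih.trans ?_
    rw [← List.rotate_rotate]
    rcases l.rotate j with _ | ⟨a, l'⟩
    · simp
    · exact isConj_iff.2 ⟨genSL a, (MprodSL_rotate_one_cons a l').symm⟩

lemma closure_genSL_one_two : Subgroup.closure {genSL 1, genSL 2} = ⊤ := by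
  have hT : T = genSL 2 * (genSL 1)⁻¹ := by
    rw [genSL_eq_T_zpow_mul_S, genSL_eq_T_zpow_mul_S]
    group
  have hS : S = (genSL 1) * (genSL 2)⁻¹ * genSL 1 := by
    rw [genSL_eq_T_zpow_mul_S, genSL_eq_T_zpow_mul_S]
    group
  have h1 : genSL 1 ∈ Subgroup.closure {genSL 1, genSL 2} := Subgroup.subset_closure (by simp)
  have h2 : genSL 2 ∈ Subgroup.closure {genSL 1, genSL 2} := Subgroup.subset_closure (by simp)
  rw [eq_top_iff, ← SpecialLinearGroup.SL2Z_generators, Subgroup.closure_le]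
  rintro _ (rfl | rfl)
  · rw [hS]; exact mul_mem (mul_mem h1 (inv_mem h2)) h1
  · rw [hT]; exact mul_mem h2 (inv_mem h1)

def positiveProducts : Submonoid SL(2, ℤ) where
  carrier := {A | ∃ l : List ℤ, (∀ x ∈ l, 0 < x) ∧ MprodSL l = A}
  mul_mem' := by
    rintro _ _ ⟨l₁, hl₁, rfl⟩ ⟨l₂, hl₂, rfl⟩
    refine ⟨l₂ ++ l₁, ?_, MprodSL_append l₂ l₁⟩
    simpa [or_imp, forall_and] using ⟨hl₂, hl₁⟩
  one_mem' := ⟨[], by simp, rfl⟩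

lemma positiveProducts_eq_top : positiveProducts = ⊤ := by
  have h : (Subgroup.closure {genSL 1, genSL 2}).toSubmonoid ≤ positiveProducts := by
    rw [Subgroup.closure_toSubmonoid, Submonoid.closure_le]
    rintro x ((rfl | rfl) | (h | h))
    · exact ⟨[1], by simp, by simp⟩
    · exact ⟨[2], by simp, by simp⟩
    · -- `genSL 1 = T * S` has order 6
      refine ⟨[1, 1, 1, 1, 1], by simp, ?_⟩
      rw [← inv_inv x, h]
      exact eq_inv_of_mul_eq_one_left (Subtype.ext (by decide))
    · refine ⟨[1, 1, 1, 1, 2, 1], by simp, ?_⟩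
      rw [← inv_inv x, h]
      exact eq_inv_of_mul_eq_one_left (Subtype.ext (by decide))
  simpa [closure_genSL_one_two] using h

lemma commute_genSL_of_rotate_one_eq {M : SL(2, ℤ)}
    (hM : ∀ l : List ℤ, l ≠ [] → (∀ x ∈ l, 0 < x) → MprodSL l = M → MprodSL (l.rotate 1) = M)
    {a : ℤ} (ha : 0 < a) : Commute (genSL a) M := by
  obtain ⟨l, hl, hlM⟩ : M * (genSL a)⁻¹ ∈ positiveProducts :=
    positiveProducts_eq_top ▸ Submonoid.mem_top _
  have hL : MprodSL (a :: l) = M := by simp [hlM]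
  have hrot := hM (a :: l) (List.cons_ne_nil a l) (by simpa [ha] using hl) hL
  rwa [MprodSL_rotate_one_cons, hL, mul_inv_eq_iff_eq_mul] at hrot

lemma mem_center_of_commute_genSL_one_two {M : SL(2, ℤ)} (h₁ : Commute (genSL 1) M)
    (h₂ : Commute (genSL 2) M) : M ∈ Subgroup.center SL(2, ℤ) := by
  have hM : M ∈ Subgroup.centralizer {genSL 1, genSL 2} := by
    rintro _ (rfl | rfl)
    exacts [h₁.eq, h₂.eq]
  rwa [← Subgroup.centralizer_closure, closure_genSL_one_two, Subgroup.coe_top,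
    Subgroup.centralizer_univ] at hM

lemma SL2Z_mem_center_iff {M : SL(2, ℤ)} : M ∈ Subgroup.center SL(2, ℤ) ↔ M = 1 ∨ M = -1 := by
  rw [Matrix.SpecialLinearGroup.mem_center_iff]
  constructor
  · rintro ⟨r, hr, hM⟩
    obtain rfl | rfl : r = 1 ∨ r = -1 := by simpa using hr
    · exact Or.inl (Subtype.ext (by simp [← hM]))
    · exact Or.inr (Subtype.ext (by ext i j; simp [← hM]))
  · rintro (rfl | rfl)
    · exact ⟨1, by simp, by simp⟩
    · exact ⟨-1, by simp, by ext i j; simp⟩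

lemma MprodSL_rotate_eq_of_mem_center {l : List ℤ} (h : MprodSL l ∈ Subgroup.center SL(2, ℤ))
    (j : ℕ) : MprodSL (l.rotate j) = MprodSL l := by
  obtain ⟨c, hc⟩ := isConj_iff.1 (isConj_MprodSL_rotate l j)
  rw [← hc, Subgroup.mem_center_iff.1 h c, mul_inv_cancel_right]

/-- `M ∈ SL₂(ℤ)` has its positive presentations invariant under all cyclic
permutations if and only if `M = Id` or `M = -Id`. -/
theorem stmt5 (M : Matrix.SpecialLinearGroup (Fin 2) ℤ) :
    (∀ l : List ℤ, l ≠ [] → (∀ x ∈ l, 0 < x) →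
      Mprod l = (M : Matrix (Fin 2) (Fin 2) ℤ) →
      ∀ j : ℕ, Mprod (l.rotate j) = (M : Matrix (Fin 2) (Fin 2) ℤ)) ↔
    (M = 1 ∨ M = -1) := by
  simp only [Mprod_eq_coe_iff]
  rw [← SL2Z_mem_center_iff]
  constructor
  · intro hM
    have hcomm {a : ℤ} (ha : 0 < a) : Commute (genSL a) M :=
      commute_genSL_of_rotate_one_eq (fun l hne hpos hl ↦ hM l hne hpos hl 1) ha
    exact mem_center_of_commute_genSL_one_two (hcomm one_pos) (hcomm two_pos)
  · rintro hM l - - rfl j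
    exact MprodSL_rotate_eq_of_mem_center hM j
end

section
/- There is no 5-tuple of strictly positive integers (a_1,…,a_5) with M_5(a_1,…,a_5) = S; moreover, for a 5-tuple of strictly positive integers, M_5(a_1,…,a_5) = −S holds if and only if (a_1,a_2,a_3,a_4,a_5) = (1,1,2,1,1). -/
private lemma mprod5 (a b c d e : ℤ) :
    Mprod [a, b, c, d, e] =
      !![a*b*c*d*e - a*b*c - a*b*e - a*d*e + a - c*d*e + c + e,
         -(b*c*d*e) + b*c + b*e + d*e - 1;
         a*b*c*d - a*b - a*d - c*d + 1,
         -(b*c*d) + b + d] := by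
  show genMat e * (genMat d * (genMat c * (genMat b * (genMat a * 1)))) = _
  simp only [genMat, mul_one, Matrix.mul_fin_two]
  ext i j
  fin_cases i <;> fin_cases j <;> simp <;> ring

private lemma entries {w x y z w' x' y' z' : ℤ}
    (h : !![w, x; y, z] = !![w', x'; y', z']) :
    w = w' ∧ x = x' ∧ y = y' ∧ z = z' := by
  refine ⟨?_, ?_, ?_, ?_⟩ <;>
    [have := congrFun (congrFun h 0) 0; have := congrFun (congrFun h 0) 1;
     have := congrFun (congrFun h 1) 0; have := congrFun (congrFun h 1) 1] <;>
    simpa using this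

private lemma bcd_cases {b c d : ℤ} (hb : 0 < b) (hc : 0 < c) (hd : 0 < d)
    (h : -(b*c*d) + b + d = 0) :
    (b = 1 ∧ c = 2 ∧ d = 1) ∨ (b = 2 ∧ c = 1 ∧ d = 2) := by
  have k : (b*c - 1) * (c*d - 1) = 1 := by linear_combination (-c) * h
  have hbc : b*c = 2 := by
    rcases Int.mul_eq_one_iff_eq_one_or_neg_one.mp k with ⟨h1, _⟩ | ⟨h1, _⟩ <;> nlinarith
  have hcd : c*d = 2 := by
    rcases Int.mul_eq_one_iff_eq_one_or_neg_one.mp k with ⟨_, h1⟩ | ⟨_, h1⟩ <;> nlinarith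
  have hb2 : b ≤ 2 := by nlinarith
  have hc2 : c ≤ 2 := by nlinarith
  have hd2 : d ≤ 2 := by nlinarith
  interval_cases b <;> interval_cases c <;> interval_cases d <;> omega

/-- For `n = 5`, `M₅ = S` has no positive solution, and `M₅ = -S` has the unique
positive solution `(1,1,2,1,1)`. -/
theorem stmt7 (a₁ a₂ a₃ a₄ a₅ : ℤ)
    (h₁ : 0 < a₁) (h₂ : 0 < a₂) (h₃ : 0 < a₃) (h₄ : 0 < a₄) (h₅ : 0 < a₅) :
    Mprod [a₁, a₂, a₃, a₄, a₅] ≠ !![0, -1; 1, 0] ∧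
    (Mprod [a₁, a₂, a₃, a₄, a₅] = -!![0, -1; 1, 0] ↔
      (a₁, a₂, a₃, a₄, a₅) = (1, 1, 2, 1, 1)) := by
  rw [mprod5]
  have hneg : -(!![0, -1; 1, 0] : Matrix (Fin 2) (Fin 2) ℤ) = !![0, 1; -1, 0] := by
    ext i j; fin_cases i <;> fin_cases j <;> simp
  rw [hneg]
  constructor
  · intro h
    obtain ⟨e00, e01, e10, e11⟩ := entries h
    rcases bcd_cases h₂ h₃ h₄ e11 with ⟨hb, hc, hd⟩ | ⟨hb, hc, hd⟩ <;>
      subst hb <;> subst hc <;> subst hd <;> omega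
  · constructor
    · intro h
      obtain ⟨e00, e01, e10, e11⟩ := entries h
      rcases bcd_cases h₂ h₃ h₄ e11 with ⟨hb, hc, hd⟩ | ⟨hb, hc, hd⟩ <;>
        subst hb <;> subst hc <;> subst hd <;>
        simp only [Prod.mk.injEq] <;> ring_nf at e00 <;>
        refine ⟨?_, ?_, ?_, ?_, ?_⟩ <;> first | trivial | omega
    · intro h
      simp only [Prod.mk.injEq] at h
      obtain ⟨r1, r2, r3, r4, r5⟩ := h
      subst r1; subst r2; subst r3; subst r4; subst r5
      ext i j
      fin_cases i <;> fin_cases j <;> norm_num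
end

section
/- If (a_1,…,a_n) is an n-tuple of strictly positive integers with M_n(a_1,…,a_n) = S or M_n(a_1,…,a_n) = −S, then there exists an index i with 2 ≤ i ≤ n−1 such that a_i = 1. -/
/-!
Only the second column `(p, q)` of `Mₙ` matters. Multiplying by `[[b,-1],[1,0]]` sends it to
`(b p - q, p)`, so after the first step `(p, q) = (-1, 0)` and, as long as every further
`b ≥ 2`, the invariant `p < q ≤ 0` persists. Hence if `a₂, …, aₙ₋₁ ≥ 2`, the entry `q` of `Mₙ`,
which is the `p` of `Mₙ₋₁`, is negative, whereas it vanishes for `±S`. Lengths `0` and `1`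
are excluded directly, the latter by the positivity of `a₁`.
-/

lemma Mprod_append_singleton (t : List ℤ) (b : ℤ) :
    Mprod (t ++ [b]) = genMat b * Mprod t := by
  simp [Mprod]

lemma genMat_mul_apply_zero_one (b : ℤ) (M : Matrix (Fin 2) (Fin 2) ℤ) :
    (genMat b * M) 0 1 = b * M 0 1 - M 1 1 := by
  simp [genMat, Matrix.mul_apply, Fin.sum_univ_two, sub_eq_add_neg]

lemma genMat_mul_apply_one_one (b : ℤ) (M : Matrix (Fin 2) (Fin 2) ℤ) :
    (genMat b * M) 1 1 = M 0 1 := by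
  simp [genMat, Matrix.mul_apply, Fin.sum_univ_two]

lemma Mprod_cons_apply_zero_one_lt_apply_one_one (a : ℤ) {t : List ℤ} (ht : ∀ x ∈ t, 2 ≤ x) :
    Mprod (a :: t) 0 1 < Mprod (a :: t) 1 1 ∧ Mprod (a :: t) 1 1 ≤ 0 := by
  induction t using List.reverseRecOn with
  | nil => simp [Mprod, genMat]
  | append_singleton t b ih =>
    have hb : 2 ≤ b := ht b (by simp)
    obtain ⟨hlt, hnonpos⟩ := ih fun x hx => ht x (by simp [hx])
    rw [← List.cons_append, Mprod_append_singleton, genMat_mul_apply_zero_one,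
      genMat_mul_apply_one_one]
    constructor <;> nlinarith

lemma Mprod_cons_append_singleton_apply_one_one_neg (a b : ℤ) {t : List ℤ}
    (ht : ∀ x ∈ t, 2 ≤ x) : Mprod (a :: t ++ [b]) 1 1 < 0 := by
  obtain ⟨hlt, hnonpos⟩ := Mprod_cons_apply_zero_one_lt_apply_one_one a ht
  rw [Mprod_append_singleton, genMat_mul_apply_one_one]
  omega

lemma exists_get_eq_of_mem_middle {a b x : ℤ} {t : List ℤ} (hx : x ∈ t) :
    ∃ i : Fin (a :: (t ++ [b])).length,
      1 ≤ (i : ℕ) ∧ (i : ℕ) + 1 < (a :: (t ++ [b])).length ∧ (a :: (t ++ [b])).get i = x := by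
  obtain ⟨j, hj, rfl⟩ := List.getElem_of_mem hx
  have hlen : (a :: (t ++ [b])).length = t.length + 2 := by simp
  refine ⟨⟨j + 1, by omega⟩, by simp, by simp only [hlen]; omega, ?_⟩
  simp [List.getElem_append_left hj]

/-- The index `i` is 0-based: `1 ≤ i` and `i + 1 < n` say `2 ≤ i ≤ n - 1` in 1-based indexing. -/
theorem stmt8 (l : List ℤ) (hpos : ∀ x ∈ l, 0 < x)
    (hsol : Mprod l = !![0, -1; 1, 0] ∨ Mprod l = -!![0, -1; 1, 0]) :
    ∃ i : Fin l.length, 1 ≤ (i : ℕ) ∧ (i : ℕ) + 1 < l.length ∧ l.get i = 1 := by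
  rcases l with _ | ⟨a, r⟩
  · rcases hsol with h | h <;> simpa [Mprod] using congrFun (congrFun h 0) 0
  rcases r.eq_nil_or_concat' with rfl | ⟨t, b, rfl⟩
  · have ha : 0 < a := hpos a (by simp)
    rcases hsol with h | h
    · simpa [Mprod, genMat, ha.ne'] using congrFun (congrFun h 0) 0
    · simpa [Mprod, genMat] using congrFun (congrFun h 1) 0
  by_contra! hcon
  have ht : ∀ x ∈ t, 2 ≤ x := fun x hx => by
    obtain ⟨i, hi1, hin, hix⟩ := exists_get_eq_of_mem_middle (a := a) (b := b) hx
    have hx_pos := hpos x (hix ▸ List.get_mem _ i)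
    have hx_ne := hix ▸ hcon i hi1 hin
    omega
  have hneg := Mprod_cons_append_singleton_apply_one_one_neg a b ht
  rcases hsol with h | h <;> simp [h] at hneg
end

section
/- Let n ≥ 2, let a_1,…,a_n be integers, and let ε ∈ {1,−1}. Then M_n(a_1,…,a_n) = ε·S if and only if M_{n−1}(a_1 + a_n, a_2,…,a_{n−1}) = ε·Id. -/
private def ginv (a : ℤ) : Matrix (Fin 2) (Fin 2) ℤ := !![0, 1; -1, a]

private lemma ginv_mul (a : ℤ) : ginv a * genMat a = 1 := by
  simp [ginv, genMat, Matrix.mul_fin_two, Matrix.one_fin_two]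

private lemma mul_ginv (a : ℤ) : genMat a * ginv a = 1 := by
  simp [ginv, genMat, Matrix.mul_fin_two, Matrix.one_fin_two]

private lemma key1 (a₁ aₙ : ℤ) :
    genMat aₙ * ginv (a₁ + aₙ) * genMat a₁ = !![0, -1; 1, 0] := by
  simp [ginv, genMat, Matrix.mul_fin_two]

private lemma key2 (a₁ aₙ : ℤ) :
    ginv aₙ * !![0, -1; 1, 0] * ginv a₁ * genMat (a₁ + aₙ) = 1 := by
  ext i j
  fin_cases i <;> fin_cases j <;>
    simp [ginv, genMat, Matrix.mul_apply, Fin.sum_univ_succ, Matrix.one_apply] <;> ring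

private lemma Mprod_expand (m : List ℤ) (a₁ aₙ : ℤ) :
    Mprod (a₁ :: m ++ [aₙ]) = genMat aₙ * Mprod m * genMat a₁ := by
  simp [Mprod, List.prod_append, mul_assoc]

private lemma Mprod_cons (m : List ℤ) (a : ℤ) :
    Mprod (a :: m) = Mprod m * genMat a := by
  simp [Mprod]

/-- For `n ≥ 2`: `Mₙ(a₁,…,aₙ) = ε·S ↔ M_{n-1}(a₁ + aₙ, a₂,…,a_{n-1}) = ε·Id`.
Here the tuple `(a₁,…,aₙ)` is written `a₁ :: m ++ [aₙ]` with `m = (a₂,…,a_{n-1})`. -/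
theorem stmt10 (m : List ℤ) (a₁ aₙ ε : ℤ) (hε : ε = 1 ∨ ε = -1) :
    Mprod (a₁ :: m ++ [aₙ]) = ε • !![0, -1; 1, 0] ↔
    Mprod ((a₁ + aₙ) :: m) = ε • (1 : Matrix (Fin 2) (Fin 2) ℤ) := by
  rw [Mprod_expand, Mprod_cons]
  set P := Mprod m with hP
  constructor
  · intro h
    have hPeq : P = ginv aₙ * (ε • !![0, -1; 1, 0]) * ginv a₁ := by
      rw [← h]
      calc P = (ginv aₙ * genMat aₙ) * P * (genMat a₁ * ginv a₁) := by
              rw [ginv_mul, mul_ginv, one_mul, mul_one]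
        _ = ginv aₙ * (genMat aₙ * P * genMat a₁) * ginv a₁ := by
              noncomm_ring
    rw [hPeq]
    calc ginv aₙ * (ε • !![0, -1; 1, 0]) * ginv a₁ * genMat (a₁ + aₙ)
        = ε • (ginv aₙ * !![0, -1; 1, 0] * ginv a₁ * genMat (a₁ + aₙ)) := by
          rw [Matrix.mul_smul, Matrix.smul_mul, Matrix.smul_mul]
      _ = ε • 1 := by rw [key2]
  · intro h
    have hPeq : P = (ε • (1 : Matrix (Fin 2) (Fin 2) ℤ)) * ginv (a₁ + aₙ) := by
      rw [← h, mul_assoc, mul_ginv, mul_one]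
    rw [hPeq]
    calc genMat aₙ * ((ε • (1 : Matrix (Fin 2) (Fin 2) ℤ)) * ginv (a₁ + aₙ)) * genMat a₁
        = ε • (genMat aₙ * ginv (a₁ + aₙ) * genMat a₁) := by
          rw [Matrix.smul_mul, one_mul, Matrix.mul_smul, Matrix.smul_mul, mul_assoc]
      _ = ε • !![0, -1; 1, 0] := by rw [key1]
end

section
/- There is no triple of strictly positive integers (a_1,a_2,a_3) with M_3(a_1,a_2,a_3) = T; moreover, for a triple of strictly positive integers, M_3(a_1,a_2,a_3) = −T holds if and only if (a_1,a_2,a_3) = (1,1,2). -/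
lemma Mprod_triple (a₁ a₂ a₃ : ℤ) :
    Mprod [a₁, a₂, a₃] = !![(a₃ * a₂ - 1) * a₁ - a₃, -(a₃ * a₂ - 1); a₂ * a₁ - 1, -a₂] := by
  simp only [Mprod, genMat, List.map_cons, List.map_nil, List.reverse_cons, List.reverse_nil,
    List.nil_append, List.cons_append, List.prod_cons, List.prod_nil, mul_one, Matrix.mul_fin_two]
  congr 1; ring_nf

-- The `(1, 1)` entry alone already fails: it is `-a₂ < 0`.
lemma Mprod_triple_ne_T {a₁ a₂ a₃ : ℤ} (h₂ : 0 < a₂) : Mprod [a₁, a₂, a₃] ≠ !![1, 1; 0, 1] := by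
  simp only [Mprod_triple, ne_eq, EmbeddingLike.apply_eq_iff_eq, Matrix.vecCons_inj, and_true]
  omega

lemma Mprod_triple_eq_neg_T_iff (a₁ a₂ a₃ : ℤ) :
    Mprod [a₁, a₂, a₃] = -!![1, 1; 0, 1] ↔ (a₁, a₂, a₃) = (1, 1, 2) := by
  simp only [Mprod_triple, neg_sub, Matrix.neg_of, Matrix.neg_cons, Matrix.neg_empty, neg_zero,
    EmbeddingLike.apply_eq_iff_eq, Matrix.vecCons_inj, and_true, neg_inj, Prod.mk.injEq]
  constructor
  · rintro ⟨⟨-, h₀₁⟩, h₁₀, rfl⟩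
    omega
  · rintro ⟨rfl, rfl, rfl⟩
    norm_num

theorem stmt15_general (a₁ a₂ a₃ : ℤ) (h₂ : 0 < a₂) :
    Mprod [a₁, a₂, a₃] ≠ !![1, 1; 0, 1] ∧
    (Mprod [a₁, a₂, a₃] = -!![1, 1; 0, 1] ↔ (a₁, a₂, a₃) = (1, 1, 2)) :=
  ⟨Mprod_triple_ne_T h₂, Mprod_triple_eq_neg_T_iff a₁ a₂ a₃⟩

/-- `M₃ = T` has no positive solution, and `M₃ = -T` has the unique positive
solution `(1,1,2)`. -/
theorem stmt15 (a₁ a₂ a₃ : ℤ) (h₁ : 0 < a₁) (h₂ : 0 < a₂) (h₃ : 0 < a₃) :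
    Mprod [a₁, a₂, a₃] ≠ !![1, 1; 0, 1] ∧
    (Mprod [a₁, a₂, a₃] = -!![1, 1; 0, 1] ↔ (a₁, a₂, a₃) = (1, 1, 2)) :=
  stmt15_general a₁ a₂ a₃ h₂
end

section
/- There is no 4-tuple of strictly positive integers (a_1,a_2,a_3,a_4) with M_4(a_1,a_2,a_3,a_4) = T; moreover, for a 4-tuple of strictly positive integers, M_4(a_1,a_2,a_3,a_4) = −T holds if and only if (a_1,a_2,a_3,a_4) = (1,2,1,3) or (a_1,a_2,a_3,a_4) = (2,1,2,2). -/
lemma Mprod_four (a₁ a₂ a₃ a₄ : ℤ) :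
    Mprod [a₁, a₂, a₃, a₄] =
      !![(a₂ * (a₃ * a₄ - 1) - a₄) * a₁ - (a₃ * a₄ - 1), a₄ - a₂ * (a₃ * a₄ - 1);
         (a₂ * a₃ - 1) * a₁ - a₃, 1 - a₂ * a₃] := by
  ext i j
  fin_cases i <;> fin_cases j <;>
    simp [Mprod, genMat, Matrix.mul_apply, Fin.sum_univ_two] <;> ring

lemma eq_and_eq_or_eq_and_eq_of_mul_eq_two {b c : ℤ} (hb : 0 < b) (hc : 0 < c) (h : b * c = 2) :
    (b = 1 ∧ c = 2) ∨ (b = 2 ∧ c = 1) := by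
  have hb2 : b ≤ 2 := by nlinarith
  interval_cases b <;> omega

lemma eq_of_Mprod_four_eq_neg_T {a₁ a₂ a₃ a₄ : ℤ} (h₂ : 0 < a₂) (h₃ : 0 < a₃)
    (h : Mprod [a₁, a₂, a₃, a₄] = -!![1, 1; 0, 1]) :
    (a₁, a₂, a₃, a₄) = (1, 2, 1, 3) ∨ (a₁, a₂, a₃, a₄) = (2, 1, 2, 2) := by
  rw [Mprod_four] at h
  have e01 : a₄ - a₂ * (a₃ * a₄ - 1) = -1 := congrFun (congrFun h 0) 1
  have e10 : (a₂ * a₃ - 1) * a₁ - a₃ = 0 := congrFun (congrFun h 1) 0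
  have e11 : 1 - a₂ * a₃ = -1 := congrFun (congrFun h 1) 1
  have hprod : a₂ * a₃ = 2 := by linarith
  have ha₁ : a₁ = a₃ := by linear_combination e10 - a₁ * hprod
  have ha₄ : a₄ = a₂ + 1 := by linear_combination -e01 - a₄ * hprod
  rcases eq_and_eq_or_eq_and_eq_of_mul_eq_two h₂ h₃ hprod with ⟨rfl, rfl⟩ | ⟨rfl, rfl⟩ <;>
    simp [ha₁, ha₄]

theorem stmt16_general (a₁ a₂ a₃ a₄ : ℤ)
    (h₂ : 0 < a₂) (h₃ : 0 < a₃) :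
    Mprod [a₁, a₂, a₃, a₄] ≠ !![1, 1; 0, 1] ∧
    (Mprod [a₁, a₂, a₃, a₄] = -!![1, 1; 0, 1] ↔
      ((a₁, a₂, a₃, a₄) = (1, 2, 1, 3) ∨ (a₁, a₂, a₃, a₄) = (2, 1, 2, 2))) := by
  refine ⟨fun h => ?_, ⟨eq_of_Mprod_four_eq_neg_T h₂ h₃, ?_⟩⟩
  · have e11 : 1 - a₂ * a₃ = 1 := by simpa [Mprod_four] using congrFun (congrFun h 1) 1
    have : 0 < a₂ * a₃ := mul_pos h₂ h₃
    omega
  · rintro (h | h) <;> simp only [Prod.mk.injEq] at h <;>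
      obtain ⟨rfl, rfl, rfl, rfl⟩ := h <;> decide

/-- `M₄ = T` has no positive solution, and `M₄ = -T` has exactly the positive
solutions `(1,2,1,3)` and `(2,1,2,2)`. -/
theorem stmt16 (a₁ a₂ a₃ a₄ : ℤ)
    (h₁ : 0 < a₁) (h₂ : 0 < a₂) (h₃ : 0 < a₃) (h₄ : 0 < a₄) :
    Mprod [a₁, a₂, a₃, a₄] ≠ !![1, 1; 0, 1] ∧
    (Mprod [a₁, a₂, a₃, a₄] = -!![1, 1; 0, 1] ↔
      ((a₁, a₂, a₃, a₄) = (1, 2, 1, 3) ∨ (a₁, a₂, a₃, a₄) = (2, 1, 2, 2))) :=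
  stmt16_general a₁ a₂ a₃ a₄ h₂ h₃
end
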